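/- arXiv:1305.4515 — 10 statements merged into one kernel-verified Lean document; each statement's English description precedes it below -/
import Mathlib

section
/- Let G be an abelian topological group, H a precompact subgroup of G such that the quotient group G/H is locally precompact. Then G is locally precompact. -/
/-- A subset `S` of a topological abelian group is precompact if for every neighborhood `V`
of `0` there is a finite set `F` with `S ⊆ F + V`. -/
def AddPrecompact {G : Type*} [AddCommGroup G] [TopologicalSpace G] (S : Set G) : Prop :=
  ∀ V ∈ nhds (0 : G), ∃ F : Finset G, ∀ s ∈ S, ∃ f ∈ F, s - f ∈ V

/-! If `U` is covered by finitely many translates of `π V`, then `π⁻¹ U` is covered by finitely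
many translates of `V + H`; covering the precompact `H` by translates of `V` as well, and
choosing `V` with `V + V` inside a given neighborhood, shows that `π⁻¹ U` is precompact. -/

open Topology

section

variable {G : Type*} [AddCommGroup G] [TopologicalSpace G]

theorem AddPrecompact.of_forall_exists_sub_sub_mem [IsTopologicalAddGroup G] {K S : Set G}
    (hK : AddPrecompact K)
    (hS : ∀ V ∈ 𝓝 (0 : G), ∃ F : Finset G, ∀ s ∈ S, ∃ f ∈ F, ∃ v ∈ V, s - f - v ∈ K) :
    AddPrecompact S := by
  classical
  intro V hV
  obtain ⟨W, hW, hWW⟩ := exists_nhds_zero_half hV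
  obtain ⟨FS, hFS⟩ := hS W hW
  obtain ⟨FK, hFK⟩ := hK W hW
  refine ⟨(FS ×ˢ FK).image (fun p => p.1 + p.2), fun s hs => ?_⟩
  obtain ⟨f, hf, v, hv, hk⟩ := hFS s hs
  obtain ⟨e, he, hke⟩ := hFK _ hk
  refine ⟨f + e, Finset.mem_image.2 ⟨(f, e), Finset.mem_product.2 ⟨hf, he⟩, rfl⟩, ?_⟩
  have hsplit : s - (f + e) = v + (s - f - v - e) := by abel
  exact hsplit ▸ hWW v hv _ hke

theorem AddPrecompact.exists_sub_sub_mem_of_preimage_mk [SeparatelyContinuousAdd G]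
    {H : AddSubgroup G} {U : Set (G ⧸ H)} (hU : AddPrecompact U) :
    ∀ V ∈ 𝓝 (0 : G), ∃ F : Finset G,
      ∀ s ∈ (QuotientAddGroup.mk : G → G ⧸ H) ⁻¹' U, ∃ f ∈ F, ∃ v ∈ V, s - f - v ∈ H := by
  classical
  intro V hV
  have hπV : (QuotientAddGroup.mk : G → G ⧸ H) '' V ∈ 𝓝 (0 : G ⧸ H) := by
    simpa using (QuotientAddGroup.isOpenMap_coe (N := H)).image_mem_nhds hV
  obtain ⟨FQ, hFQ⟩ := hU _ hπV
  refine ⟨FQ.image Quotient.out, fun s hs => ?_⟩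
  obtain ⟨f, hf, v, hv, hvf⟩ := hFQ s hs
  refine ⟨f.out, Finset.mem_image_of_mem _ hf, v, hv, ?_⟩
  rw [← QuotientAddGroup.eq_zero_iff, QuotientAddGroup.mk_sub, QuotientAddGroup.mk_sub,
    QuotientAddGroup.out_eq' f, hvf]
  abel

theorem AddPrecompact.preimage_mk [IsTopologicalAddGroup G] {H : AddSubgroup G}
    (hH : AddPrecompact (H : Set G)) {U : Set (G ⧸ H)} (hU : AddPrecompact U) :
    AddPrecompact ((QuotientAddGroup.mk : G → G ⧸ H) ⁻¹' U) :=
  hH.of_forall_exists_sub_sub_mem hU.exists_sub_sub_mem_of_preimage_mk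

end

theorem stmt0 {G : Type*} [AddCommGroup G] [TopologicalSpace G] [IsTopologicalAddGroup G]
    (H : AddSubgroup G) (hH : AddPrecompact (H : Set G))
    (hq : ∃ U ∈ nhds (0 : G ⧸ H), AddPrecompact U) :
    ∃ U ∈ nhds (0 : G), AddPrecompact U := by
  obtain ⟨U, hU, hUpc⟩ := hq
  exact ⟨_, continuous_quotient_mk'.continuousAt.preimage_mem_nhds hU, hH.preimage_mk hUpc⟩
end

section
/- Let K be a compact subgroup of a Hausdorff topological abelian group X. If the continuous characters of X separate the points of K, then every continuous character of K extends to a continuous character of X. -/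
noncomputable section

/-- The circle group `𝕋 = ℝ/ℤ`. -/
abbrev 𝕋 := AddCircle (1 : ℝ)

instance : Fact ((0 : ℝ) < 1) := ⟨one_pos⟩

/-- `⟨t⟩`: the unique representative of `t` in the interval `(-1/2, 1/2]`. -/
def torusArg (t : 𝕋) : ℝ := (AddCircle.equivIoc 1 (-(1/2)) t : ℝ)

/-- `θ(t) = |⟨t⟩|`, the norm of `t ∈ 𝕋`. -/
def torusNorm (t : 𝕋) : ℝ := |torusArg t|

/-- `T_β = {t ∈ 𝕋 : θ(t) ≤ β}`. -/
def Tset (β : ℝ) : Set 𝕋 := {t | torusNorm t ≤ β}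

/-!
Restrict the characters of `X` to `K`; they form a subgroup `D` of the dual of `K` that separates
points, and it suffices to show that such a `D` contains every continuous character `χ` of `K`.
Composing with `t ↦ exp(2πit)`, the linear span of `D` inside `C(K, ℂ)` is a point-separating
star subalgebra, hence dense by Stone–Weierstrass. If `χ ∉ D`, then by orthogonality of
characters with respect to Haar measure `μ`, the continuous functional `f ↦ ∫ conj χ · f dμ` kills
`D`, hence everything; but it sends `χ` to `μ(K) ≠ 0`.
-/

open MeasureTheory

theorem AddChar.integral_eq_zero_of_ne_one {G 𝕜 : Type*} [AddGroup G] [MeasurableSpace G]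
    [MeasurableAdd G] [RCLike 𝕜] {μ : Measure G} [μ.IsAddLeftInvariant] {ψ : AddChar G 𝕜}
    (hψ : ψ ≠ 1) : ∫ x, ψ x ∂μ = 0 := by
  obtain ⟨g, hg⟩ := AddChar.ne_one_iff.1 hψ
  have h : ψ g * ∫ x, ψ x ∂μ = ∫ x, ψ x ∂μ := by
    simpa only [AddChar.map_add_eq_mul, integral_const_mul] using
      integral_add_left_eq_self (μ := μ) (fun x => ψ x) g
  by_contra h0
  exact hg ((mul_eq_right₀ h0).1 h)

section IntegralCLM

variable {X E : Type*} [TopologicalSpace X] [CompactSpace X] [MeasurableSpace X]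
  [OpensMeasurableSpace X] [NormedAddCommGroup E] (μ : Measure X) [IsFiniteMeasure μ]

theorem ContinuousMap.integrable (f : C(X, E)) : Integrable f μ :=
  f.continuous.integrable_of_hasCompactSupport (HasCompactSupport.of_compactSpace _)

variable {𝕜 : Type*} [RCLike 𝕜] [NormedSpace ℝ E] [NormedSpace 𝕜 E] [SMulCommClass ℝ 𝕜 E]

def ContinuousMap.integralCLM : C(X, E) →L[𝕜] E :=
  LinearMap.mkContinuous
    { toFun := fun f => ∫ x, f x ∂μ
      map_add' := fun f g => integral_add (f.integrable μ) (g.integrable μ)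
      map_smul' := fun c f => integral_smul c f }
    (μ.real Set.univ) fun f => by
      rw [mul_comm]
      exact norm_integral_le_of_norm_le_const (.of_forall f.norm_coe_le_norm)

@[simp]
theorem ContinuousMap.integralCLM_apply (f : C(X, E)) :
    ContinuousMap.integralCLM (𝕜 := 𝕜) μ f = ∫ x, f x ∂μ := rfl

end IntegralCLM

def circleChar : AddChar 𝕋 ℂ := Circle.coeHom.compAddChar AddCircle.toCircle_addChar

@[simp]
theorem circleChar_apply (t : 𝕋) : circleChar t = AddCircle.toCircle t := rfl

theorem circleChar_injective : Function.Injective circleChar :=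
  fun _ _ h => AddCircle.injective_toCircle one_ne_zero (Subtype.coe_injective h)

theorem star_circleChar (t : 𝕋) : star (circleChar t) = circleChar (-t) := by
  rw [circleChar_apply, circleChar_apply, AddCircle.toCircle_neg, Circle.coe_inv_eq_conj]
  rfl

namespace ContinuousAddMonoidHom

def precomp {A B E : Type*} [AddCommGroup A] [TopologicalSpace A] [AddCommGroup B]
    [TopologicalSpace B] [AddCommGroup E] [TopologicalSpace E] [IsTopologicalAddGroup E]
    (f : A →ₜ+ B) : (B →ₜ+ E) →+ (A →ₜ+ E) where
  toFun g := g.comp f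
  map_zero' := rfl
  map_add' _ _ := rfl

section ToComplexMap

variable {G : Type*} [AddCommGroup G] [TopologicalSpace G]

def toComplexMap (ψ : G →ₜ+ 𝕋) : C(G, ℂ) :=
  ⟨fun x => circleChar (ψ x),
    (continuous_subtype_val.comp AddCircle.continuous_toCircle).comp ψ.continuous⟩

@[simp]
theorem toComplexMap_apply (ψ : G →ₜ+ 𝕋) (x : G) : ψ.toComplexMap x = circleChar (ψ x) := rfl

theorem toComplexMap_zero : (0 : G →ₜ+ 𝕋).toComplexMap = 1 := by
  ext
  simp

theorem toComplexMap_add (ψ φ : G →ₜ+ 𝕋) :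
    (ψ + φ).toComplexMap = ψ.toComplexMap * φ.toComplexMap := by
  ext
  simp [AddChar.map_add_eq_mul]

theorem star_toComplexMap (ψ : G →ₜ+ 𝕋) : star ψ.toComplexMap = (-ψ).toComplexMap := by
  ext x
  simp only [ContinuousMap.star_apply, toComplexMap_apply, star_circleChar]
  rfl

theorem adjoin_toComplexMap_subset_span (D : AddSubgroup (G →ₜ+ 𝕋)) :
    (StarAlgebra.adjoin ℂ (toComplexMap '' (D : Set (G →ₜ+ 𝕋))) : Set C(G, ℂ)) ⊆
      Submodule.span ℂ (toComplexMap '' (D : Set (G →ₜ+ 𝕋))) := by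
  set S := toComplexMap '' (D : Set (G →ₜ+ 𝕋))
  let M : Submonoid C(G, ℂ) :=
    { carrier := S
      one_mem' := ⟨0, D.zero_mem, toComplexMap_zero⟩
      mul_mem' := by
        rintro _ _ ⟨ψ, hψ, rfl⟩ ⟨φ, hφ, rfl⟩
        exact ⟨ψ + φ, D.add_mem hψ hφ, toComplexMap_add ψ φ⟩ }
  have hstar : star S ⊆ S := by
    rintro f ⟨ψ, hψ, hf⟩
    exact ⟨-ψ, D.neg_mem hψ, by rw [← star_toComplexMap, hf, star_star]⟩
  have hclosure : Submonoid.closure (S ∪ star S) = M := by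
    rw [Set.union_eq_self_of_subset_right hstar]
    exact Submonoid.closure_eq M
  intro f hf
  have hf' : f ∈ Subalgebra.toSubmodule (StarAlgebra.adjoin ℂ S).toSubalgebra := hf
  rwa [StarAlgebra.adjoin_eq_span, hclosure] at hf'

theorem integral_toComplexMap_eq_zero [MeasurableSpace G] [MeasurableAdd G] {μ : Measure G}
    [μ.IsAddLeftInvariant] {ψ : G →ₜ+ 𝕋} (hψ : ψ ≠ 0) : ∫ x, ψ.toComplexMap x ∂μ = 0 := by
  refine AddChar.integral_eq_zero_of_ne_one
    (ψ := circleChar.compAddMonoidHom ψ.toAddMonoidHom) fun h => hψ ?_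
  ext x
  apply circleChar_injective
  simpa using DFunLike.congr_fun h x

end ToComplexMap

theorem addSubgroup_eq_top_of_separatesPoints {K : Type*} [AddCommGroup K] [TopologicalSpace K]
    [IsTopologicalAddGroup K] [CompactSpace K] (D : AddSubgroup (K →ₜ+ 𝕋))
    (hsep : ∀ x : K, x ≠ 0 → ∃ ψ ∈ D, ψ x ≠ 0) : D = ⊤ := by
  borelize K
  refine eq_top_iff.2 fun χ _ => ?_
  by_contra hχ
  set S := toComplexMap '' (D : Set (K →ₜ+ 𝕋))
  set A := StarAlgebra.adjoin ℂ S
  have hA : A.SeparatesPoints := by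
    intro x y hxy
    obtain ⟨ψ, hψD, hψ⟩ := hsep (x - y) (sub_ne_zero.2 hxy)
    refine ⟨_, ⟨ψ.toComplexMap, StarAlgebra.subset_adjoin ℂ S ⟨ψ, hψD, rfl⟩, rfl⟩, fun h => hψ ?_⟩
    rw [map_sub, circleChar_injective h, sub_self]
  let μ : Measure K := Measure.addHaar
  let L : C(K, ℂ) →L[ℂ] ℂ :=
    (ContinuousMap.integralCLM μ).comp (ContinuousLinearMap.mul ℂ _ (star χ.toComplexMap))
  have hLS : S ⊆ (LinearMap.ker (L : C(K, ℂ) →ₗ[ℂ] ℂ) : Set C(K, ℂ)) := by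
    rintro _ ⟨ψ, hψ, rfl⟩
    have hne : ψ - χ ≠ 0 := sub_ne_zero.2 fun h => hχ (h ▸ hψ)
    simpa [L, star_toComplexMap, ← toComplexMap_add, ← sub_eq_neg_add] using
      integral_toComplexMap_eq_zero (μ := μ) hne
  have hLA : (A : Set C(K, ℂ)) ⊆ (LinearMap.ker (L : C(K, ℂ) →ₗ[ℂ] ℂ) : Set C(K, ℂ)) :=
    (adjoin_toComplexMap_subset_span D).trans (Submodule.span_le.2 hLS)
  have hLχ_eq_zero : L χ.toComplexMap = 0 := by
    refine closure_minimal hLA L.isClosed_ker ?_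
    rw [← A.topologicalClosure_coe,
      ContinuousMap.starSubalgebra_topologicalClosure_eq_top_of_separatesPoints A hA]
    trivial
  have hLχ_eq_measure : L χ.toComplexMap = μ.real Set.univ := by
    simp [L, star_toComplexMap, ← toComplexMap_add]
  exact measureReal_univ_ne_zero (Complex.ofReal_eq_zero.1 (hLχ_eq_measure ▸ hLχ_eq_zero))

end ContinuousAddMonoidHom

theorem stmt2_general {X : Type*} [AddCommGroup X] [TopologicalSpace X] [IsTopologicalAddGroup X]
    (K : AddSubgroup X) (hK : IsCompact (K : Set X))
    (hsep : ∀ x ∈ K, x ≠ 0 → ∃ χ : X →+ 𝕋, Continuous χ ∧ χ x ≠ 0)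
    (χ : K →+ 𝕋) (hχ : Continuous χ) :
    ∃ χ' : X →+ 𝕋, Continuous χ' ∧ ∀ k : K, χ' k = χ k := by
  have : CompactSpace K := isCompact_iff_compactSpace.mp hK
  let restrict := ContinuousAddMonoidHom.precomp (E := 𝕋) ⟨K.subtype, continuous_subtype_val⟩
  have hrestrict : restrict.range = ⊤ := by
    refine ContinuousAddMonoidHom.addSubgroup_eq_top_of_separatesPoints _ fun x hx => ?_
    obtain ⟨ψ, hψ, hψx⟩ := hsep x x.2 (by simpa using hx)
    exact ⟨restrict ⟨ψ, hψ⟩, ⟨_, rfl⟩, hψx⟩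
  obtain ⟨ψ, hψ⟩ := hrestrict.ge (AddSubgroup.mem_top ⟨χ, hχ⟩)
  exact ⟨ψ, ψ.continuous, fun k => DFunLike.congr_fun hψ k⟩

theorem stmt2 {X : Type*} [AddCommGroup X] [TopologicalSpace X] [IsTopologicalAddGroup X]
    [T2Space X] (K : AddSubgroup X) (hK : IsCompact (K : Set X))
    (hsep : ∀ x ∈ K, x ≠ 0 → ∃ χ : X →+ 𝕋, Continuous χ ∧ χ x ≠ 0)
    (χ : K →+ 𝕋) (hχ : Continuous χ) :
    ∃ χ' : X →+ 𝕋, Continuous χ' ∧ ∀ k : K, χ' k = χ k :=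
  stmt2_general K hK hsep χ hχ
end
end

section
/- Let 0 → 𝕋 →ι X →π G → 0 be a short exact sequence of topological abelian groups (ι an embedding onto ker π, π continuous open surjective). The sequence splits (admits a continuous homomorphism P: X → 𝕋 with P ∘ ι = id) if and only if the continuous characters of X separate the points of ι(𝕋). -/
/-!
Every continuous endomorphism of the circle is `z ↦ n • z`: lift it through the covering
`ℝ → AddCircle p` to a continuous additive map of `ℝ`, which is linear. Hence the restrictions of
the continuous characters of `X` to `ι(𝕋)` have degrees forming a subgroup `m ℤ` of `ℤ`. If
`m ≠ ±1`, the circle has a nonzero point killed by `m`, and so by every character. Separation of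
points therefore forces `1 ∈ m ℤ`, i.e. a character restricting to the identity.
-/

noncomputable section

namespace AddCircle

theorem exists_lift_addMonoidHom (p : ℝ) (f : AddCircle p →+ AddCircle p) (hf : Continuous f) :
    ∃ F : ℝ →+ ℝ, Continuous F ∧ ∀ x : ℝ, f x = F x := by
  have cov := isCoveringMap_coe p
  let g : C(ℝ, AddCircle p) := ⟨fun x ↦ f x, hf.comp (AddCircle.continuous_mk' p)⟩
  obtain ⟨F, ⟨hF0, hFg⟩, -⟩ := cov.existsUnique_continuousMap_lifts g 0 0 (by simp [g])
  have hF (x : ℝ) : (F x : AddCircle p) = f x := congrFun hFg x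
  -- `x ↦ F (x + y) - F y` is another lift of `g` vanishing at `0`.
  have hadd (x y : ℝ) : F (x + y) = F x + F y := by
    have := cov.eq_of_comp_eq (g₁ := fun x ↦ F (x + y) - F y) (g₂ := F) (by fun_prop)
      F.continuous (funext fun x ↦ by simp [hF]) 0 (by simp [hF0])
    linarith [congrFun this x]
  exact ⟨AddMonoidHom.mk' F hadd, F.continuous, fun x ↦ (hF x).symm⟩

variable (p : ℝ) [Fact (0 < p)]

theorem exists_eq_zsmul_of_continuous (f : AddCircle p →+ AddCircle p) (hf : Continuous f) :
    ∃ n : ℤ, ∀ z, f z = n • z := by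
  obtain ⟨F, hFc, hF⟩ := exists_lift_addMonoidHom p f hf
  have hlin (x : ℝ) : F x = x * F 1 := by simpa using map_real_smul F hFc x 1
  obtain ⟨n, hn⟩ : ∃ n : ℤ, n • p = F p := by
    rw [← coe_eq_zero_iff, ← hF, coe_period, map_zero]
  have hF1 : F 1 = n := by
    rw [hlin, zsmul_eq_mul] at hn
    exact (mul_right_cancel₀ (Fact.out : 0 < p).ne' (by linarith)).symm
  refine ⟨n, fun z ↦ ?_⟩
  obtain ⟨x, rfl⟩ := QuotientAddGroup.mk_surjective z
  rw [← coe_zsmul, hF, hlin, hF1, zsmul_eq_mul, mul_comm]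

theorem exists_ne_zero_zsmul_eq_zero {m : ℤ} (hm : ¬IsUnit m) :
    ∃ z : AddCircle p, z ≠ 0 ∧ m • z = 0 := by
  obtain ⟨n, hn, hnm⟩ : ∃ n : ℕ, 1 < n ∧ (n : ℤ) ∣ m := by
    rcases eq_or_ne m 0 with rfl | hm0
    · exact ⟨2, one_lt_two, dvd_zero _⟩
    · refine ⟨m.natAbs, ?_, Int.natAbs_dvd.mpr dvd_rfl⟩
      have := Int.natAbs_pos.mpr hm0
      have : m.natAbs ≠ 1 := fun h ↦ hm (Int.isUnit_iff_natAbs_eq.mpr h)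
      omega
  have hz := addOrderOf_period_div (p := p) (n := n) (by omega)
  refine ⟨↑(p / n), fun h ↦ ?_, addOrderOf_dvd_iff_zsmul_eq_zero.mp (by rwa [hz])⟩
  rw [h, addOrderOf_zero] at hz
  omega

theorem one_mem_of_forall_exists_zsmul_ne_zero (S : AddSubgroup ℤ)
    (hS : ∀ z : AddCircle p, z ≠ 0 → ∃ n ∈ S, n • z ≠ 0) : (1 : ℤ) ∈ S := by
  obtain ⟨m, rfl⟩ : ∃ m, S = AddSubgroup.zmultiples m := by
    simpa only [AddSubgroup.zmultiples_eq_closure] using Int.subgroup_cyclic S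
  rw [Int.mem_zmultiples_iff, ← isUnit_iff_dvd_one]
  by_contra hm
  obtain ⟨z, hz, hmz⟩ := exists_ne_zero_zsmul_eq_zero p hm
  obtain ⟨n, hn, hnz⟩ := hS z hz
  obtain ⟨k, rfl⟩ := Int.mem_zmultiples_iff.mp hn
  exact hnz (by rw [mul_comm, mul_zsmul, hmz, zsmul_zero])

end AddCircle

section characterDegrees

variable {p : ℝ} [Fact (0 < p)] {X : Type*} [AddCommGroup X] [TopologicalSpace X]

def characterDegrees (ι : AddCircle p →+ X) : AddSubgroup ℤ where
  carrier := {n | ∃ χ : X →+ AddCircle p, Continuous χ ∧ ∀ z, χ (ι z) = n • z}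
  zero_mem' := ⟨0, continuous_const, fun z ↦ by simp⟩
  add_mem' := by
    rintro a b ⟨χ₁, hc₁, h₁⟩ ⟨χ₂, hc₂, h₂⟩
    exact ⟨χ₁ + χ₂, hc₁.add hc₂, fun z ↦ by simp [h₁, h₂, add_zsmul]⟩
  neg_mem' := by
    rintro a ⟨χ, hc, hχ⟩
    exact ⟨-χ, hc.neg, fun z ↦ by simp [hχ]⟩

theorem exists_mem_characterDegrees {ι : AddCircle p →+ X} (hι : Continuous ι)
    {χ : X →+ AddCircle p} (hχ : Continuous χ) :
    ∃ n ∈ characterDegrees ι, ∀ z, χ (ι z) = n • z := by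
  obtain ⟨n, hn⟩ := AddCircle.exists_eq_zsmul_of_continuous p (χ.comp ι) (hχ.comp hι)
  exact ⟨n, ⟨χ, hχ, hn⟩, hn⟩

end characterDegrees

theorem stmt5_general {X : Type*} [AddCommGroup X] [TopologicalSpace X]
    (ι : 𝕋 →+ X)
    (hemb : Topology.IsEmbedding ⇑ι) :
    (∃ P : X →+ 𝕋, Continuous P ∧ ∀ z, P (ι z) = z) ↔
      (∀ z : 𝕋, z ≠ 0 → ∃ χ : X →+ 𝕋, Continuous χ ∧ χ (ι z) ≠ 0) := by
  constructor
  · rintro ⟨P, hPc, hP⟩ z hz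
    exact ⟨P, hPc, by rwa [hP]⟩
  · intro hsep
    have hdeg : ∀ z : 𝕋, z ≠ 0 → ∃ n ∈ characterDegrees ι, n • z ≠ 0 := fun z hz ↦ by
      obtain ⟨χ, hχc, hχz⟩ := hsep z hz
      obtain ⟨n, hn, hχn⟩ := exists_mem_characterDegrees hemb.continuous hχc
      exact ⟨n, hn, hχn z ▸ hχz⟩
    obtain ⟨P, hPc, hP⟩ := AddCircle.one_mem_of_forall_exists_zsmul_ne_zero 1 _ hdeg
    exact ⟨P, hPc, fun z ↦ by simpa using hP z⟩

theorem stmt5 {X G : Type*} [AddCommGroup X] [TopologicalSpace X] [IsTopologicalAddGroup X]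
    [AddCommGroup G] [TopologicalSpace G] [IsTopologicalAddGroup G]
    (ι : 𝕋 →+ X) (π : X →+ G)
    (hemb : Topology.IsEmbedding ⇑ι) (hker : ∀ x, π x = 0 ↔ x ∈ Set.range ⇑ι)
    (hπc : Continuous π) (hπo : IsOpenMap π) (hπs : Function.Surjective π) :
    (∃ P : X →+ 𝕋, Continuous P ∧ ∀ z, P (ι z) = z) ↔
      (∀ z : 𝕋, z ≠ 0 → ∃ χ : X →+ 𝕋, Continuous χ ∧ χ (ι z) ≠ 0) :=
  stmt5_general ι hemb
end
end

section
/- For every n ∈ ℕ ∪ {0} and β ∈ [0, 1/3), the set of t ∈ T_β such that 2^k · t ∈ T_β for all k ∈ {0, 1, …, n} equals T_{β/2^n}, where T_β = {t ∈ 𝕋 : θ(t) ≤ β} and 2^k · t denotes t^{2^k}. -/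
noncomputable section

/-!
With `θ` the norm of `AddCircle 1`, `T_β` is the closed ball of radius `β`. On a circle of
period `p`, doubling acts on norms as `‖t‖ ↦ 2‖t‖` while `‖t‖ ≤ p/4`, and as `‖t‖ ↦ p - 2‖t‖`
beyond that. When `β < p/3` the folded branch leaves the ball of radius `β`, so
`T_β ∩ 2⁻¹ T_γ = T_{γ/2}` for `γ ≤ β`, and induction on `n` peels off one doubling at a time.
-/

open Metric Set

namespace AddCircle

variable {p : ℝ}

lemma exists_coe_eq_and_abs_eq_norm (t : AddCircle p) :
    ∃ x : ℝ, (x : AddCircle p) = t ∧ |x| = ‖t‖ := by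
  induction t using QuotientAddGroup.induction_on with
  | H x =>
    refine ⟨x - round (p⁻¹ * x) * p, ?_, (norm_eq p).symm⟩
    rw [coe_sub, sub_eq_self, coe_eq_zero_iff]
    exact ⟨round (p⁻¹ * x), zsmul_eq_mul _ _⟩

lemma norm_coe_of_abs_le (hp : 0 < p) {x : ℝ} (hx : |x| ≤ p / 2) : ‖(x : AddCircle p)‖ = |x| :=
  (norm_coe_eq_abs_iff p hp.ne').2 (by rwa [abs_of_pos hp])

lemma norm_two_nsmul_of_norm_le (hp : 0 < p) {t : AddCircle p} (ht : ‖t‖ ≤ p / 4) :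
    ‖2 • t‖ = 2 * ‖t‖ := by
  obtain ⟨x, rfl, hx⟩ := exists_coe_eq_and_abs_eq_norm t
  rw [← hx] at ht ⊢
  rw [← coe_nsmul, nsmul_eq_mul, Nat.cast_two, norm_coe_of_abs_le hp] <;>
  rw [abs_mul, abs_two]
  linarith

lemma norm_two_nsmul_of_le_norm (hp : 0 < p) {t : AddCircle p} (ht : p / 4 ≤ ‖t‖) :
    ‖2 • t‖ = p - 2 * ‖t‖ := by
  obtain ⟨x, rfl, hx⟩ := exists_coe_eq_and_abs_eq_norm t
  have hhalf : |x| ≤ p / 2 := by simpa [hx, abs_of_pos hp] using norm_le_half_period p hp.ne'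
  rw [← hx] at ht ⊢
  rw [← coe_nsmul, nsmul_eq_mul, Nat.cast_two]
  rcases le_total 0 x with hx0 | hx0
  · rw [abs_of_nonneg hx0] at ht hhalf ⊢
    rw [← sub_zero ((2 * x : ℝ) : AddCircle p), ← coe_period p, ← coe_sub,
      norm_coe_of_abs_le hp] <;> rw [abs_of_nonpos (by linarith)] <;> linarith
  · rw [abs_of_nonpos hx0] at ht hhalf ⊢
    rw [← add_zero ((2 * x : ℝ) : AddCircle p), ← coe_period p, ← coe_add,
      norm_coe_of_abs_le hp] <;> rw [abs_of_nonneg (by linarith)] <;> linarith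

lemma closedBall_inter_preimage_two_nsmul {β γ : ℝ} (hp : 0 < p) (hβ : β < p / 3) (hγ : γ ≤ β) :
    closedBall (0 : AddCircle p) β ∩ (2 • ·) ⁻¹' closedBall 0 γ = closedBall 0 (γ / 2) := by
  ext t
  simp only [mem_inter_iff, mem_preimage, mem_closedBall_zero_iff]
  constructor
  · rintro ⟨htβ, h2t⟩
    rcases le_total ‖t‖ (p / 4) with h | h
    · rw [norm_two_nsmul_of_norm_le hp h] at h2t
      linarith
    · rw [norm_two_nsmul_of_le_norm hp h] at h2t
      linarith
  · intro ht
    have hγ0 : 0 ≤ γ := by linarith [norm_nonneg t]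
    refine ⟨by linarith, ?_⟩
    rw [norm_two_nsmul_of_norm_le hp (by linarith)]
    linarith

end AddCircle

lemma setOf_forall_le_succ_pow_nsmul_mem {A : Type*} [AddMonoid A] (m n : ℕ) (s : Set A) :
    {t : A | ∀ k ≤ n + 1, (m ^ k) • t ∈ s} = s ∩ (m • ·) ⁻¹' {t | ∀ k ≤ n, (m ^ k) • t ∈ s} := by
  ext t
  simp only [mem_ofPred_eq, mem_inter_iff, mem_preimage, ← Nat.lt_succ_iff,
    Nat.forall_lt_succ_left, pow_zero, one_smul, pow_succ, mul_nsmul']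

lemma torusNorm_eq_norm (t : 𝕋) : torusNorm t = ‖t‖ := by
  have hmem : torusArg t ∈ Ioc (-(1 / 2)) (-(1 / 2) + 1) := (AddCircle.equivIoc 1 _ t).2
  conv_rhs => rw [← (AddCircle.equivIoc 1 (-(1 / 2))).symm_apply_apply t]
  exact (AddCircle.norm_coe_of_abs_le one_pos
    (abs_le.2 ⟨by linarith [hmem.1], by linarith [hmem.2]⟩)).symm

lemma Tset_eq_closedBall (β : ℝ) : Tset β = closedBall 0 β := by
  ext t
  simp [Tset, torusNorm_eq_norm]

theorem stmt7 (n : ℕ) (β : ℝ) (hβ : β ∈ Set.Ico (0 : ℝ) (1/3)) :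
    {t : 𝕋 | ∀ k ≤ n, (2 ^ k : ℕ) • t ∈ Tset β} = Tset (β / 2 ^ n) := by
  induction n with
  | zero => simp
  | succ n ih =>
    have hγ : β / 2 ^ n ≤ β := div_le_self hβ.1 (one_le_pow₀ one_le_two)
    rw [setOf_forall_le_succ_pow_nsmul_mem, ih, Tset_eq_closedBall, Tset_eq_closedBall,
      AddCircle.closedBall_inter_preimage_two_nsmul one_pos (by linarith [hβ.2]) hγ,
      Tset_eq_closedBall, pow_succ, div_mul_eq_div_div]
end
end

section
/- Let G be a topological abelian group and ω: G → 𝕋 a quasi-character (ω(0) = 1 and the map (x,y) ↦ ω(x+y)·ω(x)⁻¹·ω(y)⁻¹ is continuous at (0,0)). Suppose there exist a neighborhood U of 0 in G and β ∈ (0, 1/3) with ω(U) ⊆ T_β. Then ω is continuous at 0, i.e., for every ε > 0 there is a neighborhood V of 0 with ω(V) ⊆ T_ε. -/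
noncomputable section

/-!
Near `0` the defect `ω (x + x) - ω x - ω x` is smaller than any given `ρ > 0`. If `‖ω‖ ≤ b` on a
neighbourhood of `0` with `3b + ρ < 1`, then `‖ω x + ω x‖ ≤ b + ρ` for `x` near `0`, and since
`‖ω x‖ ≤ b` the doubled point cannot have wrapped around the circle, so `‖ω x‖ ≤ (b + ρ) / 2`.
Iterating from `b = β < 1/3` pushes the bound down to `ρ`, which is arbitrary.
-/

open Filter Topology

lemma coe_torusArg (t : 𝕋) : (torusArg t : 𝕋) = t :=
  (AddCircle.equivIoc 1 (-(1/2))).symm_apply_apply t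

lemma abs_torusArg_le (t : 𝕋) : |torusArg t| ≤ 1/2 := by
  obtain ⟨h₁, h₂⟩ : -(1/2) < torusArg t ∧ torusArg t ≤ -(1/2) + 1 :=
    (AddCircle.equivIoc 1 (-(1/2)) t).2
  rw [abs_le]
  constructor <;> linarith

lemma norm_coe_of_abs_le_half {x : ℝ} (h : |x| ≤ 1/2) : ‖(x : 𝕋)‖ = |x| := by
  rw [AddCircle.norm_coe_eq_abs_iff 1 one_ne_zero]
  simpa using h

lemma norm_eq_torusNorm (t : 𝕋) : ‖t‖ = torusNorm t := by
  conv_lhs => rw [← coe_torusArg t]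
  exact norm_coe_of_abs_le_half (abs_torusArg_le t)

lemma mem_Tset_iff {β : ℝ} {t : 𝕋} : t ∈ Tset β ↔ ‖t‖ ≤ β := by
  rw [norm_eq_torusNorm]
  rfl

lemma min_abs_one_sub_abs_le_norm_coe (y : ℝ) : min |y| (1 - |y|) ≤ ‖(y : 𝕋)‖ := by
  rw [UnitAddCircle.norm_eq]
  rcases eq_or_ne (round y) 0 with h | h
  · simp [h]
  · have hk : (1 : ℝ) ≤ |(round y : ℝ)| := by exact_mod_cast Int.one_le_abs h
    have := abs_sub_abs_le_abs_sub (round y : ℝ) y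
    rw [abs_sub_comm] at this
    exact min_le_of_right_le (by linarith)

lemma norm_le_half_of_norm_add_self_le {t : 𝕋} {b c : ℝ} (hb : ‖t‖ ≤ b) (hc : ‖t + t‖ ≤ c)
    (hbc : c + 2 * b < 1) : ‖t‖ ≤ c / 2 := by
  obtain ⟨a, ha, rfl⟩ : ∃ a : ℝ, |a| ≤ 1/2 ∧ (a : 𝕋) = t :=
    ⟨_, abs_torusArg_le t, coe_torusArg t⟩
  rw [norm_coe_of_abs_le_half ha] at hb ⊢
  rw [← AddCircle.coe_add] at hc
  have hmin := (min_abs_one_sub_abs_le_norm_coe (a + a)).trans hc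
  rw [show |a + a| = 2 * |a| by rw [← two_mul, abs_mul, abs_two]] at hmin
  rcases min_le_iff.mp hmin with h | h <;> linarith

section

variable {G : Type*} [AddCommGroup G] [TopologicalSpace G] [ContinuousAdd G] {ω : G → 𝕋}
  {ρ : ℝ}

lemma eventually_norm_le_half_add
    (hρ : ∀ᶠ x in 𝓝 0, ‖ω (x + x) - ω x - ω x‖ ≤ ρ) {b : ℝ} (hb : ∀ᶠ x in 𝓝 0, ‖ω x‖ ≤ b)
    (hbρ : 3 * b + ρ < 1) : ∀ᶠ x in 𝓝 0, ‖ω x‖ ≤ (b + ρ) / 2 := by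
  have hdouble : Tendsto (fun x : G => x + x) (𝓝 0) (𝓝 0) :=
    (continuous_id.add continuous_id).tendsto' 0 0 (add_zero 0)
  filter_upwards [hρ, hb, hdouble.eventually hb] with x hxρ hxb hx2b
  have hsum : ‖ω x + ω x‖ ≤ b + ρ :=
    calc ‖ω x + ω x‖ = ‖ω (x + x) - (ω (x + x) - ω x - ω x)‖ := by congr 1; abel
    _ ≤ ‖ω (x + x)‖ + ‖ω (x + x) - ω x - ω x‖ := norm_sub_le _ _
    _ ≤ b + ρ := add_le_add hx2b hxρ
  exact norm_le_half_of_norm_add_self_le hxb hsum (by linarith)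

lemma eventually_norm_le_of_lt
    (hρ : ∀ᶠ x in 𝓝 0, ‖ω (x + x) - ω x - ω x‖ ≤ ρ) {β : ℝ} (hβ : ∀ᶠ x in 𝓝 0, ‖ω x‖ ≤ β)
    (hρβ : ρ ≤ β) (hβρ : 3 * β + ρ < 1) {ε : ℝ} (hε : ρ < ε) : ∀ᶠ x in 𝓝 0, ‖ω x‖ ≤ ε := by
  have hiter (n : ℕ) : ∀ᶠ x in 𝓝 0, ‖ω x‖ ≤ ρ + (β - ρ) / 2 ^ n := by
    induction n with
    | zero => simpa using hβ
    | succ n ih =>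
      have hle : (β - ρ) / 2 ^ n ≤ β - ρ :=
        div_le_self (sub_nonneg.mpr hρβ) (one_le_pow₀ one_le_two)
      convert eventually_norm_le_half_add hρ ih (by linarith) using 3
      rw [pow_succ]
      ring
  have hlim : Tendsto (fun n : ℕ => ρ + (β - ρ) / 2 ^ n) atTop (𝓝 ρ) := by
    simpa using tendsto_const_nhds.add
      (tendsto_const_nhds.div_atTop (tendsto_pow_atTop_atTop_of_one_lt (one_lt_two (α := ℝ))))
  obtain ⟨n, hn⟩ := (hlim.eventually (gt_mem_nhds hε)).exists
  exact (hiter n).mono fun x hx => hx.trans hn.le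

end

theorem stmt8 {G : Type*} [AddCommGroup G] [TopologicalSpace G] [IsTopologicalAddGroup G]
    (ω : G → 𝕋) (hω0 : ω 0 = 0)
    (hq : ContinuousAt (fun p : G × G => ω (p.1 + p.2) - ω p.1 - ω p.2) (0, 0))
    (U : Set G) (hU : U ∈ nhds (0 : G)) (β : ℝ) (hβ : β ∈ Set.Ioo (0 : ℝ) (1/3))
    (hωU : ∀ u ∈ U, ω u ∈ Tset β) :
    ∀ ε > (0 : ℝ), ∃ V ∈ nhds (0 : G), ∀ v ∈ V, ω v ∈ Tset ε := by
  intro ε hε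
  obtain ⟨hβ0, hβ3⟩ := hβ
  obtain ⟨ρ, hρ0, hρε, hρβ, hρβ3⟩ : ∃ ρ, 0 < ρ ∧ ρ < ε ∧ ρ ≤ β ∧ 3 * β + ρ < 1 := by
    refine ⟨min (min (ε / 2) β) ((1 - 3 * β) / 2), lt_min (lt_min (half_pos hε) hβ0) (by linarith),
      ?_, (min_le_left _ _).trans (min_le_right _ _), ?_⟩
    · exact ((min_le_left _ _).trans (min_le_left _ _)).trans_lt (half_lt_self hε)
    · linarith [min_le_right (min (ε / 2) β) ((1 - 3 * β) / 2)]
  have hdefect : ∀ᶠ x in 𝓝 (0 : G), ‖ω (x + x) - ω x - ω x‖ ≤ ρ := by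
    have hdiag := hq.comp (f := fun x : G => (x, x))
      (continuous_id.prodMk continuous_id).continuousAt
    simpa [hω0] using hdiag.eventually (Metric.closedBall_mem_nhds _ hρ0)
  have hbound : ∀ᶠ x in 𝓝 (0 : G), ‖ω x‖ ≤ β :=
    Filter.mem_of_superset hU fun u hu => mem_Tset_iff.mp (hωU u hu)
  obtain ⟨V, hV, hVε⟩ := (eventually_norm_le_of_lt hdefect hbound hρβ hρβ3 hρε).exists_mem
  exact ⟨V, hV, fun v hv => mem_Tset_iff.mpr (hVε v hv)⟩
end
end

section
/- Let G and H be topological abelian groups and ω: G → H a quasi-homomorphism (ω(0) = 0 and (x,y) ↦ ω(x+y) − ω(x) − ω(y) is continuous at (0,0)). Then the sets W(V,U) = {(h,g) ∈ H × G : g ∈ U, h ∈ ω(g) + V}, for U a neighborhood of 0 in G and V a neighborhood of 0 in H, form a basis of neighborhoods of (0,0) for a group topology on H × G. -/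
/-!
The shear `twist ω (h, g) = (h - ω g, g)` maps `W(V,U)` onto `V × U`, so the sets `W(V,U)` form a
basis of the filter `comap (twist ω) (𝓝 0)`. The shear is not additive, but `twist ω (p + q)` and
`twist ω (-p)` differ from `twist ω p + twist ω q` and `-twist ω p` only by the defect
`ω (x + y) - ω x - ω y` at the second coordinates, which tends to `0`. Hence addition and negation
are continuous at `0` for this filter, which is therefore the filter of neighbourhoods of `0` of a
group topology.
-/

open Filter Topology

/-- `W(V,U) = {(h,g) ∈ H × G : g ∈ U, h ∈ ω(g) + V}`. -/
def Wset {G H : Type*} [AddCommGroup G] [AddCommGroup H] (ω : G → H)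
    (V : Set H) (U : Set G) : Set (H × G) :=
  {p | p.2 ∈ U ∧ p.1 - ω p.2 ∈ V}

theorem Filter.exists_isTopologicalAddGroup_nhds_zero_eq {A : Type*} [AddCommGroup A]
    (F : Filter A) (h0 : pure 0 ≤ F) (hadd : Tendsto (fun p : A × A => p.1 + p.2) (F ×ˢ F) F)
    (hneg : Tendsto Neg.neg F F) :
    ∃ τ : TopologicalSpace A, @IsTopologicalAddGroup A τ _ ∧ @nhds A τ 0 = F := by
  let B : AddGroupFilterBasis A := addGroupFilterBasisOfComm F.sets ⟨Set.univ, univ_mem⟩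
    (fun _ _ hs ht => ⟨_, inter_mem hs ht, subset_rfl⟩) (fun _ hU => h0 hU)
    (fun _ hU => by
      obtain ⟨V, hV, hVU⟩ := mem_prod_self_iff.1 (hadd hU)
      exact ⟨V, hV, Set.add_subset_iff.2 fun a ha b hb => hVU (Set.mk_mem_prod ha hb)⟩)
    (fun _ hU => ⟨_, hneg hU, subset_rfl⟩)
  refine ⟨B.topology, B.isTopologicalAddGroup, ?_⟩
  rw [B.nhds_zero_eq]
  ext s
  exact ⟨fun ⟨t, ht, hts⟩ => mem_of_superset ht hts, fun hs => ⟨s, hs, subset_rfl⟩⟩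

section Twist

variable {G H : Type*} [AddCommGroup G] [AddCommGroup H] (ω : G → H)

def homDefect (p : G × G) : H := ω (p.1 + p.2) - ω p.1 - ω p.2

def twist (p : H × G) : H × G := (p.1 - ω p.2, p.2)

theorem preimage_twist_prod (V : Set H) (U : Set G) : twist ω ⁻¹' (V ×ˢ U) = Wset ω V U :=
  Set.ext fun _ => and_comm

theorem twist_add (p q : H × G) :
    twist ω (p + q) = twist ω p + twist ω q - (homDefect ω (p.2, q.2), 0) := by
  ext <;> simp only [twist, homDefect, Prod.fst_add, Prod.snd_add, Prod.fst_sub, Prod.snd_sub] <;>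
    abel

theorem twist_zero {ω : G → H} (hω0 : ω 0 = 0) : twist ω (0 : H × G) = 0 := by
  simp [twist, hω0]

theorem twist_neg {ω : G → H} (hω0 : ω 0 = 0) (p : H × G) :
    twist ω (-p) = -twist ω p + (homDefect ω (p.2, -p.2), 0) := by
  ext
  · simp only [twist, homDefect, Prod.fst_neg, Prod.snd_neg, Prod.fst_add, add_neg_cancel, hω0]
    abel
  · simp [twist]

end Twist

section Topological

variable {G H : Type*} [AddCommGroup G] [TopologicalSpace G] [AddCommGroup H] [TopologicalSpace H]
  (ω : G → H)

def twistedNhdsZero : Filter (H × G) := comap (twist ω) (𝓝 0)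

theorem hasBasis_twistedNhdsZero :
    (twistedNhdsZero ω).HasBasis (fun p : Set H × Set G => p.1 ∈ 𝓝 0 ∧ p.2 ∈ 𝓝 0)
      (fun p => Wset ω p.1 p.2) := by
  rw [twistedNhdsZero, Prod.zero_eq_mk, nhds_prod_eq]
  simpa only [id, preimage_twist_prod] using
    ((𝓝 (0 : H)).basis_sets.prod (𝓝 (0 : G)).basis_sets).comap (twist ω)

variable {ω}

theorem pure_zero_le_twistedNhdsZero (hω0 : ω 0 = 0) : pure 0 ≤ twistedNhdsZero ω := by
  rw [twistedNhdsZero, ← map_le_iff_le_comap, map_pure, twist_zero hω0]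
  exact pure_le_nhds 0

theorem tendsto_homDefect (hω0 : ω 0 = 0) (hq : ContinuousAt (homDefect ω) 0) :
    Tendsto (homDefect ω) (𝓝 0) (𝓝 0) := by
  simpa [homDefect, hω0] using hq.tendsto

theorem tendsto_add_twistedNhdsZero [IsTopologicalAddGroup G] [IsTopologicalAddGroup H]
    (hω0 : ω 0 = 0) (hq : ContinuousAt (homDefect ω) 0) :
    Tendsto (fun p : (H × G) × (H × G) => p.1 + p.2)
      (twistedNhdsZero ω ×ˢ twistedNhdsZero ω) (twistedNhdsZero ω) := by
  have hshear : Tendsto (fun u : (H × G) × (H × G) => u.1 + u.2 - (homDefect ω (u.1.2, u.2.2), 0))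
      (𝓝 0 ×ˢ 𝓝 0) (𝓝 0) := by
    have hd : Tendsto (fun u : (H × G) × (H × G) => homDefect ω (u.1.2, u.2.2))
        (𝓝 0 ×ˢ 𝓝 0) (𝓝 0) :=
      (tendsto_homDefect hω0 hq).comp ((tendsto_fst.snd_nhds).prodMk_nhds tendsto_snd.snd_nhds)
    simpa only [Prod.mk_zero_zero, add_zero, sub_zero] using
      (tendsto_fst.add tendsto_snd).sub (hd.prodMk_nhds (tendsto_const_nhds (x := (0 : G))))
  rw [twistedNhdsZero, prod_comap_comap_eq, tendsto_comap_iff]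
  convert hshear.comp tendsto_comap using 1
  ext1 p
  exact twist_add ω p.1 p.2

theorem tendsto_neg_twistedNhdsZero [IsTopologicalAddGroup G] [IsTopologicalAddGroup H]
    (hω0 : ω 0 = 0) (hq : ContinuousAt (homDefect ω) 0) :
    Tendsto Neg.neg (twistedNhdsZero ω) (twistedNhdsZero ω) := by
  have hshear : Tendsto (fun u : H × G => -u + (homDefect ω (u.2, -u.2), 0)) (𝓝 0) (𝓝 0) := by
    have hd : Tendsto (fun u : H × G => homDefect ω (u.2, -u.2)) (𝓝 0) (𝓝 0) :=
      (tendsto_homDefect hω0 hq).comp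
        ((continuous_snd.prodMk continuous_snd.neg).tendsto' 0 0 (by simp))
    simpa only [id, Prod.mk_zero_zero, neg_zero, add_zero] using
      tendsto_id.neg.add (hd.prodMk_nhds (tendsto_const_nhds (x := (0 : G))))
  rw [twistedNhdsZero, tendsto_comap_iff]
  convert hshear.comp tendsto_comap using 1
  ext1 p
  exact twist_neg hω0 p

end Topological

theorem stmt11 {G H : Type*} [AddCommGroup G] [TopologicalSpace G] [IsTopologicalAddGroup G]
    [AddCommGroup H] [TopologicalSpace H] [IsTopologicalAddGroup H]
    (ω : G → H) (hω0 : ω 0 = 0)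
    (hq : ContinuousAt (fun p : G × G => ω (p.1 + p.2) - ω p.1 - ω p.2) (0, 0)) :
    ∃ τ : TopologicalSpace (H × G), @IsTopologicalAddGroup (H × G) τ _ ∧
      (@nhds (H × G) τ 0).HasBasis
        (fun p : Set H × Set G => p.1 ∈ nhds (0 : H) ∧ p.2 ∈ nhds (0 : G))
        (fun p => Wset ω p.1 p.2) := by
  obtain ⟨τ, hτ, hnhds⟩ := (twistedNhdsZero ω).exists_isTopologicalAddGroup_nhds_zero_eq
    (pure_zero_le_twistedNhdsZero hω0) (tendsto_add_twistedNhdsZero hω0 hq)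
    (tendsto_neg_twistedNhdsZero hω0 hq)
  exact ⟨τ, hτ, hnhds ▸ hasBasis_twistedNhdsZero ω⟩
end

section
/- Let G, H be topological abelian groups and ω: G → H a quasi-homomorphism. Then the canonical inclusion ι_H: H → H ⊕_ω G, h ↦ (h, 0), is a topological embedding, and the canonical projection π_G: H ⊕_ω G → G, (h,g) ↦ g, is continuous, open, and surjective with kernel ι_H(H). -/
/-!
Both `h ↦ (h, 0)` and `Prod.snd` are group homomorphisms between topological groups, so
embedding, continuity and openness reduce to comparing neighbourhood filters of `0`. The basic
sets `W(V, U)` pull back to `V` (because `ω 0 = 0` and `0 ∈ U`) and project onto `U` (because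
`(ω g, g) ∈ W(V, U)` for `g ∈ U`).
-/

open Filter Topology

section Wset

variable {G H : Type*} [AddCommGroup G] [AddCommGroup H] {ω : G → H}

theorem preimage_inl_Wset (hω0 : ω 0 = 0) (V : Set H) {U : Set G} (hU : (0 : G) ∈ U) :
    (fun h => ((h, 0) : H × G)) ⁻¹' Wset ω V U = V := by
  ext h
  simp [Wset, hω0, hU]

theorem image_snd_Wset {V : Set H} (hV : (0 : H) ∈ V) (U : Set G) :
    Prod.snd '' Wset ω V U = U :=
  Set.Subset.antisymm (fun _ ⟨_, hp, hg⟩ => hg ▸ hp.1)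
    fun g hg => ⟨(ω g, g), ⟨hg, by simpa using hV⟩, rfl⟩

variable [TopologicalSpace G] [TopologicalSpace H] {τ : TopologicalSpace (H × G)}

theorem comap_inl_nhds_zero_of_hasBasis_Wset (hω0 : ω 0 = 0)
    (hbasis : (@nhds (H × G) τ 0).HasBasis
      (fun p : Set H × Set G => p.1 ∈ 𝓝 (0 : H) ∧ p.2 ∈ 𝓝 (0 : G))
      (fun p => Wset ω p.1 p.2)) :
    (@nhds (H × G) τ 0).comap (fun h => (h, 0)) = 𝓝 (0 : H) := by
  refine (hbasis.comap _).ext (𝓝 (0 : H)).basis_sets (fun p hp => ⟨p.1, hp.1, ?_⟩)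
    fun V hV => ⟨(V, Set.univ), ⟨hV, univ_mem⟩, ?_⟩
  · exact (preimage_inl_Wset hω0 _ (mem_of_mem_nhds hp.2)).ge
  · exact (preimage_inl_Wset hω0 _ (Set.mem_univ _)).le

theorem map_snd_nhds_zero_of_hasBasis_Wset
    (hbasis : (@nhds (H × G) τ 0).HasBasis
      (fun p : Set H × Set G => p.1 ∈ 𝓝 (0 : H) ∧ p.2 ∈ 𝓝 (0 : G))
      (fun p => Wset ω p.1 p.2)) :
    (@nhds (H × G) τ 0).map Prod.snd = 𝓝 (0 : G) := by
  refine (hbasis.map _).ext (𝓝 (0 : G)).basis_sets (fun p hp => ⟨p.2, hp.2, ?_⟩)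
    fun U hU => ⟨(Set.univ, U), ⟨univ_mem, hU⟩, ?_⟩
  · exact (image_snd_Wset (mem_of_mem_nhds hp.1) _).ge
  · exact (image_snd_Wset (Set.mem_univ _) _).le

end Wset

theorem stmt13_general {G H : Type*} [AddCommGroup G] [TopologicalSpace G] [IsTopologicalAddGroup G]
    [AddCommGroup H] [TopologicalSpace H] [IsTopologicalAddGroup H]
    (ω : G → H) (hω0 : ω 0 = 0)
    (τ : TopologicalSpace (H × G)) (hgrp : @IsTopologicalAddGroup (H × G) τ _)
    (hbasis : (@nhds (H × G) τ 0).HasBasis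
      (fun p : Set H × Set G => p.1 ∈ nhds (0 : H) ∧ p.2 ∈ nhds (0 : G))
      (fun p => Wset ω p.1 p.2)) :
    @Topology.IsEmbedding H (H × G) _ τ (fun h => (h, 0)) ∧
      @Continuous (H × G) G τ _ Prod.snd ∧
      @IsOpenMap (H × G) G τ _ Prod.snd ∧
      Function.Surjective (Prod.snd : H × G → G) ∧
      {p : H × G | p.2 = 0} = Set.range (fun h : H => ((h, 0) : H × G)) := by
  let := τ
  have hmap := map_snd_nhds_zero_of_hasBasis_Wset hbasis
  refine ⟨⟨?_, Prod.mk_left_injective 0⟩, ?_, ?_, Prod.snd_surjective, ?_⟩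
  · exact IsTopologicalAddGroup.isInducing_iff_nhds_zero (f := AddMonoidHom.inl H G) |>.2
      (comap_inl_nhds_zero_of_hasBasis_Wset hω0 hbasis).symm
  · exact continuous_of_continuousAt_zero (AddMonoidHom.snd H G) hmap.le
  · exact IsTopologicalAddGroup.isOpenMap_iff_nhds_zero (f := AddMonoidHom.snd H G) |>.2 hmap.ge
  · ext ⟨h, g⟩
    simp [eq_comm]

theorem stmt13 {G H : Type*} [AddCommGroup G] [TopologicalSpace G] [IsTopologicalAddGroup G]
    [AddCommGroup H] [TopologicalSpace H] [IsTopologicalAddGroup H]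
    (ω : G → H) (hω0 : ω 0 = 0)
    (hq : ContinuousAt (fun p : G × G => ω (p.1 + p.2) - ω p.1 - ω p.2) (0, 0))
    (τ : TopologicalSpace (H × G)) (hgrp : @IsTopologicalAddGroup (H × G) τ _)
    (hbasis : (@nhds (H × G) τ 0).HasBasis
      (fun p : Set H × Set G => p.1 ∈ nhds (0 : H) ∧ p.2 ∈ nhds (0 : G))
      (fun p => Wset ω p.1 p.2)) :
    @Topology.IsEmbedding H (H × G) _ τ (fun h => (h, 0)) ∧
      @Continuous (H × G) G τ _ Prod.snd ∧
      @IsOpenMap (H × G) G τ _ Prod.snd ∧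
      Function.Surjective (Prod.snd : H × G → G) ∧
      {p : H × G | p.2 = 0} = Set.range (fun h : H => ((h, 0) : H × G)) :=
  stmt13_general ω hω0 τ hgrp hbasis
end

section
/- Let G, H be topological abelian groups and ω: G → H a quasi-homomorphism. The twisted sum 0 → H → H ⊕_ω G → G → 0 splits (i.e., the projection π_G admits a continuous homomorphic right inverse) if and only if ω is approximable (i.e., there is a homomorphism a: G → H with ω − a continuous at 0). -/
/-!
A homomorphic section of `π_G` has the form `g ↦ (a g, g)` with `a : G →+ H`. By the shape of the
neighbourhood basis `W(V,U)`, such a map tends to `0` at `0` exactly when `a g - ω g → 0`, and a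
homomorphism between topological groups is continuous as soon as it is continuous at `0`.
-/

open Filter Topology

theorem tendsto_nhds_zero_iff_of_hasBasis_Wset {X G H : Type*} [AddCommGroup G]
    [TopologicalSpace G] [AddCommGroup H] [TopologicalSpace H] {ω : G → H}
    {τ : TopologicalSpace (H × G)}
    (hbasis : (@nhds (H × G) τ 0).HasBasis
      (fun p : Set H × Set G => p.1 ∈ 𝓝 (0 : H) ∧ p.2 ∈ 𝓝 (0 : G))
      (fun p => Wset ω p.1 p.2))
    {l : Filter X} {f : X → H × G} :
    Tendsto f l (@nhds (H × G) τ 0) ↔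
      Tendsto (fun x => (f x).2) l (𝓝 0) ∧ Tendsto (fun x => (f x).1 - ω (f x).2) l (𝓝 0) := by
  rw [hbasis.tendsto_right_iff]
  refine ⟨fun h => ⟨fun U hU => ?_, fun V hV => ?_⟩, fun ⟨h₂, h₁⟩ p ⟨hV, hU⟩ => ?_⟩
  · exact (h (Set.univ, U) ⟨univ_mem, hU⟩).mono fun _ hx => hx.1
  · exact (h (V, Set.univ) ⟨hV, univ_mem⟩).mono fun _ hx => hx.2
  · exact Filter.Eventually.and (h₂ hU) (h₁ hV)

theorem stmt14_general {G H : Type*} [AddCommGroup G] [TopologicalSpace G] [IsTopologicalAddGroup G]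
    [AddCommGroup H] [TopologicalSpace H] [IsTopologicalAddGroup H]
    (ω : G → H)
    (τ : TopologicalSpace (H × G)) (hgrp : @IsTopologicalAddGroup (H × G) τ _)
    (hbasis : (@nhds (H × G) τ 0).HasBasis
      (fun p : Set H × Set G => p.1 ∈ nhds (0 : H) ∧ p.2 ∈ nhds (0 : G))
      (fun p => Wset ω p.1 p.2)) :
    (∃ S : G →+ H × G, @Continuous G (H × G) _ τ ⇑S ∧ ∀ g, (S g).2 = g) ↔
      (∃ a : G →+ H, Filter.Tendsto (fun g => ω g - a g) (nhds 0) (nhds (0 : H))) := by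
  let := τ
  constructor
  · rintro ⟨S, hS, hSsec⟩
    have hS0 : Tendsto S (𝓝 0) (𝓝 0) := by simpa using hS.tendsto 0
    have hfst := ((tendsto_nhds_zero_iff_of_hasBasis_Wset hbasis).1 hS0).2.neg
    refine ⟨(AddMonoidHom.fst H G).comp S, ?_⟩
    simpa [hSsec] using hfst
  · rintro ⟨a, ha⟩
    refine ⟨a.prod (AddMonoidHom.id G), continuous_of_continuousAt_zero _ ?_, fun _ => rfl⟩
    have hsec0 := (tendsto_nhds_zero_iff_of_hasBasis_Wset (f := a.prod (AddMonoidHom.id G))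
      hbasis).2 ⟨tendsto_id, by simpa using ha.neg⟩
    simpa [ContinuousAt, Prod.zero_eq_mk] using hsec0

theorem stmt14 {G H : Type*} [AddCommGroup G] [TopologicalSpace G] [IsTopologicalAddGroup G]
    [AddCommGroup H] [TopologicalSpace H] [IsTopologicalAddGroup H]
    (ω : G → H) (hω0 : ω 0 = 0)
    (hq : ContinuousAt (fun p : G × G => ω (p.1 + p.2) - ω p.1 - ω p.2) (0, 0))
    (τ : TopologicalSpace (H × G)) (hgrp : @IsTopologicalAddGroup (H × G) τ _)
    (hbasis : (@nhds (H × G) τ 0).HasBasis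
      (fun p : Set H × Set G => p.1 ∈ nhds (0 : H) ∧ p.2 ∈ nhds (0 : G))
      (fun p => Wset ω p.1 p.2)) :
    (∃ S : G →+ H × G, @Continuous G (H × G) _ τ ⇑S ∧ ∀ g, (S g).2 = g) ↔
      (∃ a : G →+ H, Filter.Tendsto (fun g => ω g - a g) (nhds 0) (nhds (0 : H))) :=
  stmt14_general ω τ hgrp hbasis
end

section
/- Suppose G is a topological abelian group containing an open subgroup A with the property that every short exact sequence 0 → 𝕋 → X → A → 0 of topological abelian groups splits. Then every short exact sequence 0 → 𝕋 → X → G → 0 of topological abelian groups splits. -/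
noncomputable section

universe u

/-!
A short exact sequence `0 → K → X → Q → 0` splits exactly when the copy of `K` admits a continuous
retraction `χ : X →+ K`. Over the open subgroup `Y = π⁻¹(A)` the restricted sequence splits, which
gives such a retraction on `Y`. Since `𝕋` is divisible it extends to a homomorphism on all of `X`,
and that extension is continuous because it is continuous on the open subgroup `Y`.
-/

open Topology

structure IsTopologicalShortExact {K X Q : Type*} [AddCommGroup K] [AddCommGroup X] [AddCommGroup Q]
    [TopologicalSpace K] [TopologicalSpace X] [TopologicalSpace Q] (j : K →+ X) (π : X →+ Q) :
    Prop where
  isEmbedding : IsEmbedding j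
  map_eq_zero_iff : ∀ x, π x = 0 ↔ x ∈ Set.range j
  continuous : Continuous π
  isOpenMap : IsOpenMap π
  surjective : Function.Surjective π

namespace IsTopologicalShortExact

variable {K X Q : Type*} [AddCommGroup K] [AddCommGroup X] [AddCommGroup Q]
    [TopologicalSpace K] [TopologicalSpace X] [TopologicalSpace Q] {j : K →+ X} {π : X →+ Q}

lemma mem_comap (h : IsTopologicalShortExact j π) (A : AddSubgroup Q) (t : K) :
    j t ∈ A.comap π := by
  simp [(h.map_eq_zero_iff _).2 ⟨t, rfl⟩]

theorem restrict (h : IsTopologicalShortExact j π) (A : AddSubgroup Q) :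
    IsTopologicalShortExact (j.codRestrict _ (h.mem_comap A)) (π.addSubgroupComap A) where
  isEmbedding := h.isEmbedding.codRestrict _ _
  map_eq_zero_iff y := by
    rw [Subtype.ext_iff]
    change π y = 0 ↔ _
    rw [h.map_eq_zero_iff]
    exact ⟨fun ⟨t, ht⟩ ↦ ⟨t, Subtype.ext ht⟩, fun ⟨t, ht⟩ ↦ ⟨t, congrArg Subtype.val ht⟩⟩
  continuous := (h.continuous.comp continuous_subtype_val).subtype_mk _
  isOpenMap := h.isOpenMap.restrictPreimage A
  surjective := π.addSubgroupComap_surjective_of_surjective A h.surjective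

end IsTopologicalShortExact

section Splitting

variable {K X Q : Type*} [AddCommGroup K] [AddCommGroup X] [AddCommGroup Q]
    [TopologicalSpace K] [TopologicalSpace X] [TopologicalSpace Q] [IsTopologicalAddGroup X]
    {j : K →+ X} {π : X →+ Q}

theorem exists_continuous_retraction_of_continuous_section (hj : IsEmbedding j)
    (hker : ∀ x, π x = 0 ↔ x ∈ Set.range j) (hπ : Continuous π)
    (S : Q →+ X) (hS : Continuous S) (hπS : ∀ q, π (S q) = q) :
    ∃ χ : X →+ K, Continuous χ ∧ ∀ t, χ (j t) = t := by
  have hρ : ∀ x, (AddMonoidHom.id X - S.comp π) x ∈ j.range := fun x ↦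
    (hker _).1 (by simp [hπS])
  let χ : X →+ K := (AddMonoidHom.ofInjective hj.injective).symm.toAddMonoidHom.comp
    ((AddMonoidHom.id X - S.comp π).codRestrict j.range hρ)
  have hjχ : ∀ x, j (χ x) = x - S (π x) := fun x ↦
    AddMonoidHom.apply_ofInjective_symm hj.injective _
  refine ⟨χ, ?_, fun t ↦ hj.injective ?_⟩
  · rw [hj.continuous_iff, show j ∘ χ = fun x ↦ x - S (π x) from funext hjχ]
    exact continuous_id.sub (hS.comp hπ)
  · rw [hjχ, (hker _).2 ⟨t, rfl⟩, map_zero, sub_zero]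

theorem exists_continuous_section_of_continuous_retraction (hj : Continuous j)
    (hker : ∀ x, π x = 0 ↔ x ∈ Set.range j) (hπ : IsQuotientMap π)
    (χ : X →+ K) (hχ : Continuous χ) (hχj : ∀ t, χ (j t) = t) :
    ∃ S : Q →+ X, Continuous S ∧ ∀ q, π (S q) = q := by
  let ρ : X →+ X := AddMonoidHom.id X - j.comp χ
  have hρ : π.ker ≤ ρ.ker := by
    intro x hx
    obtain ⟨t, rfl⟩ := (hker x).1 hx
    simp [ρ, hχj]
  let S : Q →+ X := π.liftOfSurjective hπ.surjective ⟨ρ, hρ⟩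
  have hSπ : ∀ x, S (π x) = ρ x := π.liftOfRightInverse_comp_apply _ _ _
  refine ⟨S, ?_, ?_⟩
  · rw [hπ.continuous_iff, show S ∘ π = ρ from funext hSπ]
    exact continuous_id.sub (hj.comp hχ)
  · intro q
    obtain ⟨x, rfl⟩ := hπ.surjective q
    simp [hSπ, ρ, (hker _).2 ⟨χ x, rfl⟩]

end Splitting

theorem AddSubgroup.exists_continuous_extension_of_isOpen {X D : Type*} [AddCommGroup X]
    [TopologicalSpace X] [IsTopologicalAddGroup X] [AddCommGroup D] [TopologicalSpace D]
    [ContinuousAdd D] [DivisibleBy D ℤ] {Y : AddSubgroup X} (hY : IsOpen (Y : Set X))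
    (χ₀ : Y →+ D) (hχ₀ : Continuous χ₀) :
    ∃ χ : X →+ D, Continuous χ ∧ χ.comp Y.subtype = χ₀ := by
  obtain ⟨χ, hχ⟩ := (Module.Baer.of_divisible D).extension_property_addMonoidHom
    Y.subtype Subtype.val_injective χ₀
  have hχY : ContinuousOn χ Y := by
    rw [continuousOn_iff_continuous_domRestrict]
    rwa [show (Y : Set X).domRestrict χ = χ₀ from funext (DFunLike.congr_fun hχ)]
  exact ⟨χ, continuous_of_continuousAt_zero χ (hχY.continuousAt (hY.mem_nhds Y.zero_mem)), hχ⟩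

theorem stmt15_general {G : Type u} [AddCommGroup G] [TopologicalSpace G]
    (A : AddSubgroup G) (hA : IsOpen (A : Set G))
    (hsplit : ∀ (X : Type u) [AddCommGroup X] [TopologicalSpace X] [IsTopologicalAddGroup X]
      (j : 𝕋 →+ X) (π : X →+ A),
      Topology.IsEmbedding ⇑j → (∀ x, π x = 0 ↔ x ∈ Set.range ⇑j) →
      Continuous π → IsOpenMap π → Function.Surjective π →
      ∃ S : A →+ X, Continuous S ∧ ∀ a : A, π (S a) = a)
    (X : Type u) [AddCommGroup X] [TopologicalSpace X] [IsTopologicalAddGroup X]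
    (j : 𝕋 →+ X) (π : X →+ G)
    (hj : Topology.IsEmbedding ⇑j) (hker : ∀ x, π x = 0 ↔ x ∈ Set.range ⇑j)
    (hπc : Continuous π) (hπo : IsOpenMap π) (hπs : Function.Surjective π) :
    ∃ S : G →+ X, Continuous S ∧ ∀ g, π (S g) = g := by
  have hE : IsTopologicalShortExact j π := ⟨hj, hker, hπc, hπo, hπs⟩
  have hEA := hE.restrict A
  obtain ⟨S₀, hS₀c, hS₀⟩ := hsplit _ _ _ hEA.isEmbedding hEA.map_eq_zero_iff hEA.continuous
    hEA.isOpenMap hEA.surjective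
  obtain ⟨χ₀, hχ₀c, hχ₀⟩ := exists_continuous_retraction_of_continuous_section hEA.isEmbedding
    hEA.map_eq_zero_iff hEA.continuous S₀ hS₀c hS₀
  obtain ⟨χ, hχc, hχ⟩ :=
    (A.comap π).exists_continuous_extension_of_isOpen (hA.preimage hπc) χ₀ hχ₀c
  exact exists_continuous_section_of_continuous_retraction hj.continuous hker
    (hπo.isQuotientMap hπc hπs) χ hχc fun t ↦ (DFunLike.congr_fun hχ _).trans (hχ₀ t)

theorem stmt15 {G : Type u} [AddCommGroup G] [TopologicalSpace G] [IsTopologicalAddGroup G]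
    (A : AddSubgroup G) (hA : IsOpen (A : Set G))
    (hsplit : ∀ (X : Type u) [AddCommGroup X] [TopologicalSpace X] [IsTopologicalAddGroup X]
      (j : 𝕋 →+ X) (π : X →+ A),
      Topology.IsEmbedding ⇑j → (∀ x, π x = 0 ↔ x ∈ Set.range ⇑j) →
      Continuous π → IsOpenMap π → Function.Surjective π →
      ∃ S : A →+ X, Continuous S ∧ ∀ a : A, π (S a) = a)
    (X : Type u) [AddCommGroup X] [TopologicalSpace X] [IsTopologicalAddGroup X]
    (j : 𝕋 →+ X) (π : X →+ G)
    (hj : Topology.IsEmbedding ⇑j) (hker : ∀ x, π x = 0 ↔ x ∈ Set.range ⇑j)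
    (hπc : Continuous π) (hπo : IsOpenMap π) (hπs : Function.Surjective π) :
    ∃ S : G →+ X, Continuous S ∧ ∀ g, π (S g) = g :=
  stmt15_general A hA hsplit X j π hj hker hπc hπo hπs
end
end

section
/- Let (G_α)_{α∈I} be a family of topological abelian groups such that for each α every short exact sequence 0 → 𝕋 → X → G_α → 0 of topological abelian groups splits. Then every short exact sequence 0 → 𝕋 → X → ⊕_{α∈I} G_α → 0 splits, where the direct sum carries the coproduct (finest) group topology making all inclusions continuous. -/
noncomputable section

universe u v

/-! Pull the extension `0 → 𝕋 → X → ⊕ G_α → 0` back along each inclusion `G_α → ⊕ G_α`: the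
fibre product `X ×_{⊕ G} G_α` is again an extension of `G_α` by `𝕋`, so it splits, and composing its
section with the projection to `X` gives a continuous lift `G_α → X` of the inclusion. These lifts
assemble to a homomorphism `⊕ G_α → X`, which is a section of `π` and is continuous by the universal
property of the coproduct topology. -/

namespace AddMonoidHom

section Pullback

variable {X B H : Type*} [AddGroup X] [AddGroup B] [AddGroup H] (π : X →+ B) (f : H →+ B)

def pullback : AddSubgroup (X × H) :=
  (π.comp (fst X H)).eqLocus (f.comp (snd X H))

theorem mem_pullback {q : X × H} : q ∈ π.pullback f ↔ π q.1 = f q.2 := Iff.rfl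

def pullbackFst : π.pullback f →+ X := (fst X H).comp (π.pullback f).subtype

def pullbackSnd : π.pullback f →+ H := (snd X H).comp (π.pullback f).subtype

theorem map_pullbackFst (q : π.pullback f) : π (π.pullbackFst f q) = f (π.pullbackSnd f q) :=
  q.2

theorem pullbackSnd_surjective (hπ : Function.Surjective π) :
    Function.Surjective (π.pullbackSnd f) := fun h ↦
  let ⟨x, hx⟩ := hπ (f h)
  ⟨⟨(x, h), hx⟩, rfl⟩

def pullbackInl {K : Type*} [AddGroup K] (j : K →+ X) (hj : ∀ k, π (j k) = 0) :
    K →+ π.pullback f :=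
  (j.prod 0).codRestrict _ fun k ↦ by simp [mem_pullback, hj]

theorem pullbackSnd_eq_zero_iff {K : Type*} [AddGroup K] {j : K →+ X}
    (hker : ∀ x, π x = 0 ↔ x ∈ Set.range j) (q : π.pullback f) :
    π.pullbackSnd f q = 0 ↔ q ∈ Set.range (π.pullbackInl f j fun k ↦ (hker _).2 ⟨k, rfl⟩) := by
  obtain ⟨⟨x, h⟩, hq⟩ := q
  refine ⟨fun (hh : h = 0) ↦ ?_, ?_⟩
  · subst hh
    obtain ⟨k, rfl⟩ := (hker x).1 (by simpa [mem_pullback] using hq)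
    exact ⟨k, rfl⟩
  · rintro ⟨k, hk⟩
    rw [← hk]
    rfl

variable [TopologicalSpace X] [TopologicalSpace H]

theorem continuous_pullbackFst : Continuous (π.pullbackFst f) :=
  continuous_fst.comp continuous_subtype_val

theorem continuous_pullbackSnd : Continuous (π.pullbackSnd f) :=
  continuous_snd.comp continuous_subtype_val

/-- Pulling back preserves openness: near `(x, h)`, a basic open `U × V` of `X × H` projects onto
`V ∩ f⁻¹(π U)`, which is open because `π` is open and `f` is continuous. -/
theorem isOpenMap_pullbackSnd [TopologicalSpace B] (hπ : IsOpenMap π) (hf : Continuous f) :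
    IsOpenMap (π.pullbackSnd f) := by
  intro U hU
  obtain ⟨W, hW, rfl⟩ := isOpen_induced_iff.mp hU
  rw [isOpen_iff_mem_nhds]
  rintro _ ⟨⟨⟨x, h⟩, hq⟩, hqW, rfl⟩
  obtain ⟨U₀, V₀, hU₀, hV₀, hx, hh, hsub⟩ := isOpen_prod_iff.mp hW x h hqW
  refine Filter.mem_of_superset ((hV₀.inter ((hπ U₀ hU₀).preimage hf)).mem_nhds ⟨hh, x, hx, hq⟩) ?_
  rintro h' ⟨hh', x', hx', hx'h'⟩
  exact ⟨⟨(x', h'), hx'h'⟩, hsub ⟨hx', hh'⟩, rfl⟩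

theorem isEmbedding_pullbackInl {K : Type*} [AddGroup K] [TopologicalSpace K] {j : K →+ X}
    (hj : Topology.IsEmbedding j) (hjπ : ∀ k, π (j k) = 0) :
    Topology.IsEmbedding (π.pullbackInl f j hjπ) :=
  Topology.IsEmbedding.of_comp
    ((hj.continuous.prodMk continuous_const).subtype_mk _) (π.continuous_pullbackFst f) hj

theorem exists_continuous_lift_of_pullbackSnd_section {S : H →+ π.pullback f} (hS : Continuous S)
    (hSπ : ∀ h, π.pullbackSnd f (S h) = h) : ∃ s : H →+ X, Continuous s ∧ ∀ h, π (s h) = f h :=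
  ⟨(π.pullbackFst f).comp S, (π.continuous_pullbackFst f).comp hS, fun h ↦ by
    rw [comp_apply, map_pullbackFst, hSπ]⟩

end Pullback

end AddMonoidHom

theorem stmt18_general {I : Type v} [DecidableEq I] (G : I → Type u)
    [∀ i, AddCommGroup (G i)] [∀ i, TopologicalSpace (G i)] [∀ i, IsTopologicalAddGroup (G i)]
    (τ : TopologicalSpace (DirectSum I G))
    (hincl : ∀ i, @Continuous (G i) (DirectSum I G) _ τ ⇑(DirectSum.of G i))
    (huniv : ∀ (Y : Type u) [AddCommGroup Y] [TopologicalSpace Y] [IsTopologicalAddGroup Y]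
      (f : (DirectSum I G) →+ Y), (∀ i, Continuous ⇑(f.comp (DirectSum.of G i))) →
      @Continuous (DirectSum I G) Y τ _ ⇑f)
    (hsplit : ∀ i, ∀ (X : Type u) [AddCommGroup X] [TopologicalSpace X] [IsTopologicalAddGroup X]
      (j : 𝕋 →+ X) (p : X →+ G i),
      Topology.IsEmbedding ⇑j → (∀ x, p x = 0 ↔ x ∈ Set.range ⇑j) →
      Continuous p → IsOpenMap p → Function.Surjective p →
      ∃ S : G i →+ X, Continuous S ∧ ∀ g, p (S g) = g)
    (X : Type u) [AddCommGroup X] [TopologicalSpace X] [IsTopologicalAddGroup X]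
    (j : 𝕋 →+ X) (π : X →+ (DirectSum I G))
    (hj : Topology.IsEmbedding ⇑j) (hker : ∀ x, π x = 0 ↔ x ∈ Set.range ⇑j)
    (hπo : @IsOpenMap X (DirectSum I G) _ τ ⇑π)
    (hπs : Function.Surjective ⇑π) :
    ∃ S : (DirectSum I G) →+ X, @Continuous (DirectSum I G) X τ _ ⇑S ∧ ∀ g, π (S g) = g := by
  let := τ
  have hjπ : ∀ t, π (j t) = 0 := fun t ↦ (hker _).2 ⟨t, rfl⟩
  have lift (i : I) : ∃ s : G i →+ X, Continuous s ∧ ∀ g, π (s g) = DirectSum.of G i g := by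
    let f := DirectSum.of G i
    obtain ⟨S, hS, hSπ⟩ := hsplit i (π.pullback f) (π.pullbackInl f j hjπ) (π.pullbackSnd f)
      (π.isEmbedding_pullbackInl f hj hjπ) (π.pullbackSnd_eq_zero_iff f hker)
      (π.continuous_pullbackSnd f) (π.isOpenMap_pullbackSnd f hπo (hincl i))
      (π.pullbackSnd_surjective f hπs)
    exact π.exists_continuous_lift_of_pullbackSnd_section f hS hSπ
  choose s hs hsec using lift
  have hsection : π.comp (DirectSum.toAddMonoid s) = AddMonoidHom.id _ :=
    DirectSum.addHom_ext fun i g ↦ by simp [hsec]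
  exact ⟨DirectSum.toAddMonoid s,
    huniv X _ fun i ↦ (hs i).congr fun g ↦ (DirectSum.toAddMonoid_of s i g).symm,
    DFunLike.congr_fun hsection⟩

theorem stmt18 {I : Type v} [DecidableEq I] (G : I → Type u)
    [∀ i, AddCommGroup (G i)] [∀ i, TopologicalSpace (G i)] [∀ i, IsTopologicalAddGroup (G i)]
    (τ : TopologicalSpace (DirectSum I G)) (hτgrp : @IsTopologicalAddGroup (DirectSum I G) τ _)
    (hincl : ∀ i, @Continuous (G i) (DirectSum I G) _ τ ⇑(DirectSum.of G i))
    (huniv : ∀ (Y : Type u) [AddCommGroup Y] [TopologicalSpace Y] [IsTopologicalAddGroup Y]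
      (f : (DirectSum I G) →+ Y), (∀ i, Continuous ⇑(f.comp (DirectSum.of G i))) →
      @Continuous (DirectSum I G) Y τ _ ⇑f)
    (hsplit : ∀ i, ∀ (X : Type u) [AddCommGroup X] [TopologicalSpace X] [IsTopologicalAddGroup X]
      (j : 𝕋 →+ X) (p : X →+ G i),
      Topology.IsEmbedding ⇑j → (∀ x, p x = 0 ↔ x ∈ Set.range ⇑j) →
      Continuous p → IsOpenMap p → Function.Surjective p →
      ∃ S : G i →+ X, Continuous S ∧ ∀ g, p (S g) = g)
    (X : Type u) [AddCommGroup X] [TopologicalSpace X] [IsTopologicalAddGroup X]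
    (j : 𝕋 →+ X) (π : X →+ (DirectSum I G))
    (hj : Topology.IsEmbedding ⇑j) (hker : ∀ x, π x = 0 ↔ x ∈ Set.range ⇑j)
    (hπc : @Continuous X (DirectSum I G) _ τ ⇑π) (hπo : @IsOpenMap X (DirectSum I G) _ τ ⇑π)
    (hπs : Function.Surjective ⇑π) :
    ∃ S : (DirectSum I G) →+ X, @Continuous (DirectSum I G) X τ _ ⇑S ∧ ∀ g, π (S g) = g :=
  stmt18_general G τ hincl huniv hsplit X j π hj hker hπo hπs
end
end
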